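/- arXiv:0906.1249 — 2 statements merged into one kernel-verified Lean document; each statement's English description precedes it below -/
import Mathlib

section
/- The solid angle subtended at the apex O by the base of a regular tight triangular pyramid (apex at distance 1 above the center of an equilateral triangle whose incircle has radius 1/√3) is strictly greater than 4π/13; in fact 13 times this solid angle exceeds 4π. -/
open Real MeasureTheory Metric Set

/-!
Let `A₀, A₁, A₂` be the vertices of the base. The linear map `L` (`vertexMap`) sending the
standard basis vector `eⱼ` to `Aⱼ / √3` has Gram matrix `(6 I + J) / 9 ≤ I` (with `J` the
all-ones matrix), so it is a contraction, and it maps the nonnegative orthant into the cone over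
the base. Hence the part of the unit ball inside the cone contains `L` applied to an octant of
the unit ball, whose volume is `|det L| · (1/8) · (4π/3) = (2/3) · (π/6) = π/9`. The solid angle
is therefore at least `π/3 > 4π/13`.
-/

namespace EuclideanSpace

section Orthant

variable {ι : Type*} [Fintype ι]

noncomputable def signFlip [DecidableEq ι] (s : Finset ι) :
    EuclideanSpace ℝ ι ≃ₗᵢ[ℝ] EuclideanSpace ℝ ι :=
  LinearIsometryEquiv.piLpCongrRight 2 fun i =>
    if i ∈ s then LinearIsometryEquiv.neg ℝ else LinearIsometryEquiv.refl ℝ ℝ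

theorem volume_ball_le_two_pow_mul_volume_ball_inter_nonneg (r : ℝ) :
    volume (ball (0 : EuclideanSpace ℝ ι) r) ≤
      2 ^ Fintype.card ι * volume (ball (0 : EuclideanSpace ℝ ι) r ∩ {x | ∀ i, 0 ≤ x i}) := by
  classical
  set Q := ball (0 : EuclideanSpace ℝ ι) r ∩ {x | ∀ i, 0 ≤ x i}
  have hcover : ball (0 : EuclideanSpace ℝ ι) r ⊆
      ⋃ s : Finset ι, (signFlip s).toMeasurableEquiv ⁻¹' Q := by
    intro x hx
    refine mem_iUnion.2 ⟨Finset.univ.filter (fun i => x i < 0), ?_, fun i => ?_⟩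
    · simpa using hx
    · simp only [signFlip, LinearIsometryEquiv.coe_toMeasurableEquiv,
        LinearIsometryEquiv.piLpCongrRight_apply, Finset.mem_filter, Finset.mem_univ, true_and]
      split_ifs with h
      · simp only [LinearIsometryEquiv.coe_neg, Left.nonneg_neg_iff]
        exact h.le
      · simpa using h
  calc volume (ball (0 : EuclideanSpace ℝ ι) r)
      ≤ ∑ s : Finset ι, volume ((signFlip s).toMeasurableEquiv ⁻¹' Q) :=
        (measure_mono hcover).trans (measure_iUnion_fintype_le _ _)
    _ = 2 ^ Fintype.card ι * volume Q := by
        simp_rw [fun s : Finset ι => MeasurePreserving.measure_preimage_equiv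
          (f := (signFlip s).toMeasurableEquiv)
          (signFlip s).measurePreserving Q]
        simp only [Finset.sum_const, Finset.card_univ, Fintype.card_finset, nsmul_eq_mul,
          Nat.cast_pow, Nat.cast_ofNat]

end Orthant

theorem ofReal_pi_div_six_le_volume_ball_inter_nonneg :
    ENNReal.ofReal (π / 6) ≤
      volume (ball (0 : EuclideanSpace ℝ (Fin 3)) 1 ∩ {x | ∀ i, 0 ≤ x i}) := by
  have h := volume_ball_le_two_pow_mul_volume_ball_inter_nonneg (ι := Fin 3) 1
  rw [volume_ball_fin_three, Fintype.card_fin, ENNReal.ofReal_one, one_pow,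
    one_mul, show π * 4 / 3 = 8 * (π / 6) by ring, ENNReal.ofReal_mul (by norm_num)] at h
  norm_num at h
  exact (ENNReal.mul_le_mul_iff_right (a := 8) (by norm_num) (by norm_num)).1 h

end EuclideanSpace

def coneOver {V : Type*} [AddCommGroup V] [Module ℝ V] (s : Set V) : Set V :=
  {y | ∃ t : ℝ, 0 ≤ t ∧ ∃ p ∈ convexHull ℝ s, y = t • p}

theorem sum_smul_mem_coneOver {ι V : Type*} [Fintype ι] [Nonempty ι]
    [AddCommGroup V] [Module ℝ V] (v : ι → V) {c : ι → ℝ} (hc : ∀ i, 0 ≤ c i) :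
    ∑ i, c i • v i ∈ coneOver (range v) := by
  rcases (Finset.sum_nonneg fun i _ => hc i).eq_or_lt with h0 | hpos
  · have hc0 : ∀ i, c i = 0 := fun i =>
      (Finset.sum_eq_zero_iff_of_nonneg fun j _ => hc j).1 h0.symm i (Finset.mem_univ i)
    obtain ⟨i⟩ := ‹Nonempty ι›
    exact ⟨0, le_rfl, v i, subset_convexHull ℝ _ ⟨i, rfl⟩, by simp [hc0]⟩
  · refine ⟨∑ i, c i, hpos.le, Finset.univ.centerMass c v,
      Finset.univ.centerMass_mem_convexHull (fun i _ => hc i) hpos fun i _ => ⟨i, rfl⟩, ?_⟩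
    rw [Finset.centerMass, smul_inv_smul₀ hpos.ne']

noncomputable def pyramidVertex (k : Fin 3) : EuclideanSpace ℝ (Fin 3) :=
  (WithLp.equiv 2 _).symm
    ![(2 / Real.sqrt 3) * Real.cos (2 * π * k / 3),
      (2 / Real.sqrt 3) * Real.sin (2 * π * k / 3), 1]

theorem pyramidVertex_eq : pyramidVertex =
    ![!₂[2 / √3, 0, 1], !₂[-(1 / √3), 1, 1], !₂[-(1 / √3), -1, 1]] := by
  have hcos : cos (2 * π / 3) = -(1 / 2) := by
    rw [show 2 * π / 3 = π - π / 3 by ring, cos_pi_sub, cos_pi_div_three]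
  have hsin : sin (2 * π / 3) = √3 / 2 := by
    rw [show 2 * π / 3 = π - π / 3 by ring, sin_pi_sub, sin_pi_div_three]
  have hcos2 : cos (2 * π * 2 / 3) = -(1 / 2) := by
    rw [show 2 * π * 2 / 3 = π / 3 + π by ring, cos_add_pi, cos_pi_div_three]
  have hsin2 : sin (2 * π * 2 / 3) = -(√3 / 2) := by
    rw [show 2 * π * 2 / 3 = π / 3 + π by ring, sin_add_pi, sin_pi_div_three]
  ext k i
  fin_cases k <;> fin_cases i <;> simp [pyramidVertex, hcos, hsin, hcos2, hsin2] <;> field_simp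

theorem sqrt_three_pow_four : √3 ^ 4 = 9 := by
  rw [show √3 ^ 4 = (√3 ^ 2) ^ 2 by ring, sq_sqrt (by norm_num)]
  norm_num

noncomputable def vertexMap : EuclideanSpace ℝ (Fin 3) →ₗ[ℝ] EuclideanSpace ℝ (Fin 3) :=
  Matrix.toEuclideanLin (Matrix.of fun i j => pyramidVertex j i / √3)

theorem vertexMap_apply (x : EuclideanSpace ℝ (Fin 3)) :
    vertexMap x = ∑ j, (x j / √3) • pyramidVertex j := by
  ext i
  simp only [vertexMap, Matrix.toLpLin_apply, Matrix.mulVec, dotProduct, Matrix.of_apply,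
    Fin.sum_univ_three, PiLp.add_apply, PiLp.smul_apply, smul_eq_mul]
  ring

theorem det_vertexMap : LinearMap.det vertexMap = 2 / 3 := by
  rw [vertexMap, Matrix.toEuclideanLin_eq_toLin_orthonormal, LinearMap.det_toLin,
    Matrix.det_fin_three]
  simp only [pyramidVertex_eq, one_div, Fin.isValue, Matrix.of_apply, Matrix.cons_val_zero,
    Matrix.cons_val_one, Matrix.cons_val, zero_div, mul_zero, zero_mul, sub_zero, add_zero]
  field_simp
  rw [sqrt_three_pow_four]
  norm_num

theorem norm_vertexMap_le (x : EuclideanSpace ℝ (Fin 3)) : ‖vertexMap x‖ ≤ ‖x‖ := by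
  rw [← sq_le_sq₀ (norm_nonneg _) (norm_nonneg _), EuclideanSpace.norm_sq_eq,
    EuclideanSpace.norm_sq_eq]
  simp only [vertexMap_apply, pyramidVertex_eq, one_div, Fin.sum_univ_three, Fin.isValue,
    Matrix.cons_val_zero, Matrix.cons_val_one, Matrix.cons_val, PiLp.add_apply, PiLp.smul_apply,
    smul_eq_mul, norm_eq_abs, sq_abs, mul_neg, mul_zero, mul_one, zero_add]
  field_simp
  rw [sqrt_three_pow_four, sq_sqrt zero_le_three]
  nlinarith [sq_nonneg (x 0 - x 1), sq_nonneg (x 1 - x 2), sq_nonneg (x 0 - x 2)]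

theorem pi_div_nine_le_volume_ball_inter_coneOver :
    ENNReal.ofReal (π / 9) ≤
      volume (ball (0 : EuclideanSpace ℝ (Fin 3)) 1 ∩ coneOver (range pyramidVertex)) := by
  set Q := ball (0 : EuclideanSpace ℝ (Fin 3)) 1 ∩ {x | ∀ i, 0 ≤ x i}
  have hsub : vertexMap '' Q ⊆ ball 0 1 ∩ coneOver (range pyramidVertex) := by
    rintro _ ⟨x, ⟨hx, hx0⟩, rfl⟩
    refine ⟨mem_ball_zero_iff.2 ((norm_vertexMap_le x).trans_lt (mem_ball_zero_iff.1 hx)), ?_⟩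
    rw [vertexMap_apply]
    exact sum_smul_mem_coneOver _ fun i => div_nonneg (hx0 i) (sqrt_nonneg 3)
  calc ENNReal.ofReal (π / 9)
      = ENNReal.ofReal |LinearMap.det vertexMap| * ENNReal.ofReal (π / 6) := by
        rw [det_vertexMap, abs_of_pos (by norm_num), ← ENNReal.ofReal_mul (by norm_num)]
        ring_nf
    _ ≤ ENNReal.ofReal |LinearMap.det vertexMap| * volume Q := by
        gcongr; exact EuclideanSpace.ofReal_pi_div_six_le_volume_ball_inter_nonneg
    _ = volume (vertexMap '' Q) := (Measure.addHaar_image_linearMap _ _ _).symm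
    _ ≤ _ := measure_mono hsub

/-- The solid angle (measured as three times the volume of the part of the unit
ball cut out by the corresponding cone from the apex) subtended at the apex
`O = 0` by the base of a regular tight triangular pyramid — whose base is the
equilateral triangle with incircle of radius `1/√3` centered at `H = (0,0,1)`
in the plane at distance 1 from `O` (so circumradius `2/√3`) — is strictly
greater than `4π/13`; equivalently, 13 times this solid angle exceeds `4π`. -/
theorem thirteen_times_solid_angle_triangular_gt_four_pi :
    let A : Fin 3 → EuclideanSpace ℝ (Fin 3) := fun k =>
      (WithLp.equiv 2 _).symm
        ![(2 / Real.sqrt 3) * Real.cos (2 * π * k / 3),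
          (2 / Real.sqrt 3) * Real.sin (2 * π * k / 3), 1]
    let cone : Set (EuclideanSpace ℝ (Fin 3)) :=
      {y | ∃ t : ℝ, 0 ≤ t ∧ ∃ p ∈ convexHull ℝ (Set.range A), y = t • p}
    let ϖ := 3 * (MeasureTheory.volume (Metric.ball (0 : EuclideanSpace ℝ (Fin 3)) 1 ∩ cone)).toReal
    4 * π / 13 < ϖ ∧ 4 * π < 13 * ϖ := by
  intro A cone ϖ
  have hfin : volume (ball (0 : EuclideanSpace ℝ (Fin 3)) 1 ∩ cone) ≠ ⊤ :=
    ((measure_mono inter_subset_left).trans_lt measure_ball_lt_top).ne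
  have hvol : π / 9 ≤ (volume (ball (0 : EuclideanSpace ℝ (Fin 3)) 1 ∩ cone)).toReal :=
    (ENNReal.ofReal_le_iff_le_toReal hfin).1 pi_div_nine_le_volume_ball_inter_coneOver
  constructor <;> linarith [pi_pos]
end

section
/- For the function s(α₁, α₂, α₃) = tan α₁ + tan α₂ + tan α₃ + tan(π − α₁ − α₂ − α₃) on the domain where all four angles lie in (0, π/2), the unique critical point is α₁ = α₂ = α₃ = π/4, and it is the global minimum with value 4. -/
open Real Set

/-!
The minimum is Jensen's inequality for the strictly convex function `tan` on `[0, π/2)`, with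
four angles of mean `π/4`, and its equality case. A critical point has
`tan' α₁ = tan' α₂ = tan' α₃ = tan' α₄`, and `tan' = 1 / cos²` is strictly increasing on
`[0, π/2)`, so the four angles coincide.
-/

section SumFour

variable {f : ℝ → ℝ} {k a b c da db dc dd : ℝ}

theorem fderiv_sum_four_apply (ha : HasDerivAt f da a) (hb : HasDerivAt f db b)
    (hc : HasDerivAt f dc c) (hd : HasDerivAt f dd (k - a - b - c)) (v : ℝ × ℝ × ℝ) :
    fderiv ℝ (fun q : ℝ × ℝ × ℝ => f q.1 + f q.2.1 + f q.2.2 + f (k - q.1 - q.2.1 - q.2.2))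
      (a, b, c) v = (da - dd) * v.1 + (db - dd) * v.2.1 + (dc - dd) * v.2.2 := by
  have hsnd := hasFDerivAt_snd (𝕜 := ℝ) (p := ((a, b, c) : ℝ × ℝ × ℝ))
  have hrest : HasFDerivAt (fun q : ℝ × ℝ × ℝ => k - q.1 - q.2.1 - q.2.2) _ (a, b, c) :=
    ((hasFDerivAt_fst.const_sub k).sub hsnd.fst).sub hsnd.snd
  have H : HasFDerivAt
      (fun q : ℝ × ℝ × ℝ => f q.1 + f q.2.1 + f q.2.2 + f (k - q.1 - q.2.1 - q.2.2)) _ (a, b, c) :=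
    (((ha.comp_hasFDerivAt _ hasFDerivAt_fst).add (hb.comp_hasFDerivAt _ hsnd.fst)).add
      (hc.comp_hasFDerivAt _ hsnd.snd)).add (hd.comp_hasFDerivAt (a, b, c) hrest)
  rw [H.fderiv]
  simp only [add_apply, smul_apply, ContinuousLinearMap.coe_fst', smul_eq_mul,
    ContinuousLinearMap.comp_apply, ContinuousLinearMap.coe_snd', sub_apply, neg_apply]
  ring

theorem fderiv_sum_four_eq_zero_iff (ha : HasDerivAt f da a) (hb : HasDerivAt f db b)
    (hc : HasDerivAt f dc c) (hd : HasDerivAt f dd (k - a - b - c)) :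
    fderiv ℝ (fun q : ℝ × ℝ × ℝ => f q.1 + f q.2.1 + f q.2.2 + f (k - q.1 - q.2.1 - q.2.2))
      (a, b, c) = 0 ↔ da = dd ∧ db = dd ∧ dc = dd := by
  simp only [ContinuousLinearMap.ext_iff, fderiv_sum_four_apply ha hb hc hd, zero_apply]
  constructor
  · intro h
    have h₁ := h (1, 0, 0)
    have h₂ := h (0, 1, 0)
    have h₃ := h (0, 0, 1)
    norm_num at h₁ h₂ h₃
    exact ⟨by linarith, by linarith, by linarith⟩
  · rintro ⟨rfl, rfl, rfl⟩ v
    ring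

theorem eq_sub_sub_sub_iff_eq_div_four :
    (a = k - a - b - c ∧ b = k - a - b - c ∧ c = k - a - b - c) ↔
      (a, b, c) = (k / 4, k / 4, k / 4) := by
  simp only [Prod.mk.injEq]
  constructor <;> rintro ⟨h₁, h₂, h₃⟩ <;> refine ⟨?_, ?_, ?_⟩ <;> linarith

end SumFour

section JensenFour

variable {s : Set ℝ} {f : ℝ → ℝ} {a b c d : ℝ}

theorem ConvexOn.four_mul_map_mean_le (hf : ConvexOn ℝ s f) (ha : a ∈ s) (hb : b ∈ s)
    (hc : c ∈ s) (hd : d ∈ s) :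
    4 * f ((a + b + c + d) / 4) ≤ f a + f b + f c + f d := by
  have h := hf.map_sum_le (t := Finset.univ) (w := fun _ => (1 / 4 : ℝ)) (p := ![a, b, c, d])
    (by simp) (by norm_num) (by simp [Fin.forall_fin_succ, ha, hb, hc, hd])
  simp only [Fin.sum_univ_four, Matrix.cons_val, smul_eq_mul] at h
  rw [show (a + b + c + d) / 4 = 1 / 4 * a + 1 / 4 * b + 1 / 4 * c + 1 / 4 * d by ring]
  linarith

theorem StrictConvexOn.sum_four_eq_four_mul_map_mean_iff (hf : StrictConvexOn ℝ s f)
    (ha : a ∈ s) (hb : b ∈ s) (hc : c ∈ s) (hd : d ∈ s) :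
    f a + f b + f c + f d = 4 * f ((a + b + c + d) / 4) ↔ a = d ∧ b = d ∧ c = d := by
  constructor
  · intro h
    have heq := hf.eq_of_le_map_sum (t := Finset.univ) (w := fun _ => (1 / 4 : ℝ))
      (p := ![a, b, c, d]) (by simp) (by norm_num)
      (by simp [Fin.forall_fin_succ, ha, hb, hc, hd]) ?_
    · exact ⟨heq (Finset.mem_univ 0) (Finset.mem_univ 3),
        heq (Finset.mem_univ 1) (Finset.mem_univ 3), heq (Finset.mem_univ 2) (Finset.mem_univ 3)⟩
    simp only [Fin.sum_univ_four, Matrix.cons_val, smul_eq_mul]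
    rw [show 1 / 4 * a + 1 / 4 * b + 1 / 4 * c + 1 / 4 * d = (a + b + c + d) / 4 by ring]
    linarith
  · rintro ⟨ha, hb, hc⟩
    rw [ha, hb, hc, show (d + d + d + d) / 4 = d by ring]
    ring

end JensenFour

theorem strictMonoOn_one_div_cos_sq : StrictMonoOn (fun x => 1 / cos x ^ 2) (Ico 0 (π / 2)) := by
  intro x hx y hy hxy
  have hIcc : Ico 0 (π / 2) ⊆ Icc 0 π :=
    Ico_subset_Icc_self.trans (Icc_subset_Icc_right (by linarith [pi_pos]))
  have hcy : 0 < cos y := cos_pos_of_mem_Ioo ⟨by linarith [hy.1, pi_pos], hy.2⟩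
  have hcos : cos y < cos x := strictAntiOn_cos (hIcc hx) (hIcc hy) hxy
  exact one_div_lt_one_div_of_lt (by positivity) (pow_lt_pow_left₀ hcos hcy.le two_ne_zero)

theorem strictConvexOn_tan : StrictConvexOn ℝ (Ico 0 (π / 2)) tan := by
  refine StrictMonoOn.strictConvexOn_of_deriv (convex_Ico _ _)
    (continuousOn_tan_Ioo.mono fun x hx => ⟨by linarith [hx.1, pi_pos], hx.2⟩) ?_
  rw [interior_Ico, funext deriv_tan]
  exact strictMonoOn_one_div_cos_sq.mono Ioo_subset_Ico_self

/-- For `s(α₁,α₂,α₃) = tan α₁ + tan α₂ + tan α₃ + tan (π − α₁ − α₂ − α₃)` on the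
domain where all four angles lie in `(0, π/2)`, the unique critical point is
`α₁ = α₂ = α₃ = π/4`, and it is the global minimum, with value 4. -/
theorem tan_sum_critical_point_and_min :
    let s : ℝ × ℝ × ℝ → ℝ := fun p =>
      Real.tan p.1 + Real.tan p.2.1 + Real.tan p.2.2 +
        Real.tan (π - p.1 - p.2.1 - p.2.2)
    let D : Set (ℝ × ℝ × ℝ) := {p | p.1 ∈ Ioo 0 (π / 2) ∧ p.2.1 ∈ Ioo 0 (π / 2) ∧
      p.2.2 ∈ Ioo 0 (π / 2) ∧ (π - p.1 - p.2.1 - p.2.2) ∈ Ioo 0 (π / 2)}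
    ∀ p ∈ D,
      (fderiv ℝ s p = 0 ↔ p = (π / 4, π / 4, π / 4)) ∧
      4 ≤ s p ∧
      (s p = 4 ↔ p = (π / 4, π / 4, π / 4)) := by
  rintro s D ⟨a, b, c⟩ ⟨ha, hb, hc, hd⟩
  have hderiv {x : ℝ} (hx : x ∈ Ioo 0 (π / 2)) : HasDerivAt tan (1 / cos x ^ 2) x :=
    hasDerivAt_tan (cos_pos_of_mem_Ioo ⟨by linarith [hx.1, pi_pos], hx.2⟩).ne'
  have hinj := strictMonoOn_one_div_cos_sq.injOn
  have hmem : Ioo 0 (π / 2) ⊆ Ico 0 (π / 2) := Ioo_subset_Ico_self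
  have hmean : 4 * tan ((a + b + c + (π - a - b - c)) / 4) = 4 := by
    rw [show (a + b + c + (π - a - b - c)) / 4 = π / 4 by ring, tan_pi_div_four, mul_one]
  have hjensen := strictConvexOn_tan.sum_four_eq_four_mul_map_mean_iff
    (hmem ha) (hmem hb) (hmem hc) (hmem hd)
  rw [hmean] at hjensen
  refine ⟨?_, ?_, ?_⟩
  · rw [fderiv_sum_four_eq_zero_iff (hderiv ha) (hderiv hb) (hderiv hc) (hderiv hd),
      ← eq_sub_sub_sub_iff_eq_div_four]
    exact and_congr (hinj.eq_iff (hmem ha) (hmem hd)) <|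
      and_congr (hinj.eq_iff (hmem hb) (hmem hd)) (hinj.eq_iff (hmem hc) (hmem hd))
  · simpa only [hmean] using strictConvexOn_tan.convexOn.four_mul_map_mean_le
      (hmem ha) (hmem hb) (hmem hc) (hmem hd)
  · exact hjensen.trans eq_sub_sub_sub_iff_eq_div_four
end
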